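/- The subspace A_z^0 = Q ⊕ Q·e_z ⊕ (⊕_{a ∈ {0,z}, b ∈ {1,z}} e_a A_z e_b), the span of the empty word, the single letter e_z, and all words beginning with e_0 or e_z and ending with e_1 or e_z, is closed under the shuffle product. -/

import Mathlib

open Finsupp

variable {α : Type} [DecidableEq α]

noncomputable def wordShuffle : List α → List α → (List α →₀ ℚ)
  | [], v => Finsupp.single v 1
  | u, [] => Finsupp.single u 1
  | a :: u, b :: v =>
      (wordShuffle u (b :: v)).mapDomain (a :: ·) +
      (wordShuffle (a :: u) v).mapDomain (b :: ·)
termination_by u v => u.length + v.length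

noncomputable def shuffle (x y : List α →₀ ℚ) : List α →₀ ℚ :=
  x.sum fun u cu => y.sum fun v cv => (cu * cv) • wordShuffle u v

/-- Membership in `A_z^0 = ℚ ⊕ ℚ e_z ⊕ (⊕_{a∈{0,z}, b∈{1,z}} e_a A_z e_b)`:
every word in the support is empty, or is the single letter `e_z`, or starts
with `e₀` or `e_z` and ends with `e₁` or `e_z`.
Letters: `0 ↔ e₀`, `1 ↔ e₁`, `2 ↔ e_z`. -/
def InAz0 (x : List (Fin 3) →₀ ℚ) : Prop :=
  ∀ w ∈ x.support, w = [] ∨ w = [(2 : Fin 3)] ∨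
    ((w.head? = some (0 : Fin 3) ∨ w.head? = some (2 : Fin 3)) ∧
     (w.getLast? = some (1 : Fin 3) ∨ w.getLast? = some (2 : Fin 3)))

/-! The shuffle of two words only ever interleaves them, so each word in the support of
`u ш v` begins with the first letter of `u` or of `v` and ends with the last letter of `u` or
of `v`. Hence, for any sets `H`, `L` of letters, the span of the words whose first letter lies in
`H` and whose last letter lies in `L` (the empty word included) is closed under shuffle. The space
`A_z^0` is this span for `H = {e₀, e_z}` and `L = {e₁, e_z}`: the single letter `e_z` needs no
separate treatment because `e_z` lies in both sets. -/

namespace Shuffle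

lemma head?_eq_of_mem_support_wordShuffle {u v w : List α}
    (hw : w ∈ (wordShuffle u v).support) : w.head? = u.head? ∨ w.head? = v.head? := by
  induction u, v using wordShuffle.induct with
  | case1 v =>
    rw [wordShuffle.eq_1] at hw
    rw [Finset.mem_singleton.mp (support_single_subset hw)]
    exact .inr rfl
  | case2 u hu =>
    rw [wordShuffle.eq_2 u hu] at hw
    rw [Finset.mem_singleton.mp (support_single_subset hw)]
    exact .inl rfl
  | case3 a u b v =>
    rw [wordShuffle.eq_3] at hw
    rcases Finset.mem_union.mp (support_add hw) with hw | hw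
    · obtain ⟨w', -, rfl⟩ := Finset.mem_image.mp (mapDomain_support hw)
      exact .inl rfl
    · obtain ⟨w', -, rfl⟩ := Finset.mem_image.mp (mapDomain_support hw)
      exact .inr rfl

lemma getLast?_eq_of_mem_support_wordShuffle {u v w : List α}
    (hw : w ∈ (wordShuffle u v).support) :
    w.getLast? = u.getLast? ∨ w.getLast? = v.getLast? := by
  induction u, v using wordShuffle.induct generalizing w with
  | case1 v =>
    rw [wordShuffle.eq_1] at hw
    rw [Finset.mem_singleton.mp (support_single_subset hw)]
    exact .inr rfl
  | case2 u hu =>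
    rw [wordShuffle.eq_2 u hu] at hw
    rw [Finset.mem_singleton.mp (support_single_subset hw)]
    exact .inl rfl
  | case3 a u b v ih₁ ih₂ =>
    rw [wordShuffle.eq_3] at hw
    rcases Finset.mem_union.mp (support_add hw) with hw | hw
    · obtain ⟨w', hw', rfl⟩ := Finset.mem_image.mp (mapDomain_support hw)
      rcases ih₁ hw' with h | h <;> simp [List.getLast?_cons, h]
    · obtain ⟨w', hw', rfl⟩ := Finset.mem_image.mp (mapDomain_support hw)
      rcases ih₂ hw' with h | h <;> simp [List.getLast?_cons, h]

lemma exists_mem_support_wordShuffle_of_mem_support_shuffle {x y : List α →₀ ℚ} {w : List α}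
    (hw : w ∈ (shuffle x y).support) :
    ∃ u ∈ x.support, ∃ v ∈ y.support, w ∈ (wordShuffle u v).support := by
  obtain ⟨u, hu, hw⟩ := Finset.mem_biUnion.mp (support_sum hw)
  obtain ⟨v, hv, hw⟩ := Finset.mem_biUnion.mp (support_sum hw)
  exact ⟨u, hu, v, hv, support_smul hw⟩

theorem forall_mem_support_shuffle {P : List α → Prop}
    (hP : ∀ u v w, P u → P v → w ∈ (wordShuffle u v).support → P w)
    {x y : List α →₀ ℚ} (hx : ∀ u ∈ x.support, P u) (hy : ∀ v ∈ y.support, P v) :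
    ∀ w ∈ (shuffle x y).support, P w := by
  intro w hw
  obtain ⟨u, hu, v, hv, hw⟩ := exists_mem_support_wordShuffle_of_mem_support_shuffle hw
  exact hP u v w (hx u hu) (hy v hv) hw

def HeadLastIn (H L : Set α) (w : List α) : Prop :=
  (∀ a ∈ w.head?, a ∈ H) ∧ ∀ b ∈ w.getLast?, b ∈ L

lemma HeadLastIn.of_mem_support_wordShuffle {H L : Set α} {u v w : List α}
    (hu : HeadLastIn H L u) (hv : HeadLastIn H L v) (hw : w ∈ (wordShuffle u v).support) :
    HeadLastIn H L w := by
  constructor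
  · rcases head?_eq_of_mem_support_wordShuffle hw with h | h <;> rw [h]
    exacts [hu.1, hv.1]
  · rcases getLast?_eq_of_mem_support_wordShuffle hw with h | h <;> rw [h]
    exacts [hu.2, hv.2]

end Shuffle

open Shuffle

lemma inAz0_iff_headLastIn (x : List (Fin 3) →₀ ℚ) :
    InAz0 x ↔ ∀ w ∈ x.support, HeadLastIn {0, 2} {1, 2} w := by
  refine forall₂_congr fun w _ => ?_
  rcases w with _ | ⟨a, w⟩
  · simp [HeadLastIn]
  · rcases List.eq_nil_or_concat w with rfl | ⟨w, b, rfl⟩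
    · fin_cases a <;> simp [HeadLastIn]
    · simp [HeadLastIn, List.getLast?_cons]

/-- `A_z^0` is closed under the shuffle product. -/
theorem Az0_shuffle_closed (x y : List (Fin 3) →₀ ℚ)
    (hx : InAz0 x) (hy : InAz0 y) : InAz0 (shuffle x y) := by
  rw [inAz0_iff_headLastIn] at *
  exact forall_mem_support_shuffle (fun _ _ _ => HeadLastIn.of_mem_support_wordShuffle) hx hy
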